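/- arXiv:0905.2527 — 7 statements merged into one kernel-verified Lean document; each statement's English description precedes it below -/
import Mathlib

section
/- Let G be a graph with n vertices and m edges, let r ≤ n/2, and let R be a set of r highest-degree vertices. Then the bipartite subgraph H with parts R and V∖R, consisting of all edges of G with exactly one endpoint in R, has at least 2rm/n − 3r² edges. -/
theorem stmt3 {V : Type*} [Fintype V] [DecidableEq V]
    (G : SimpleGraph V) [DecidableRel G.Adj]
    (n m r : ℕ) (hn : Fintype.card V = n) (hm : G.edgeFinset.card = m)
    (hr0 : 0 < r) (hrn : (r : ℝ) ≤ n / 2)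
    (R : Finset V) (hR : R.card = r)
    (hhigh : ∀ v ∈ R, ∀ w ∉ R, G.degree w ≤ G.degree v) :
    2 * r * (m : ℝ) / n - 3 * r ^ 2 ≤
      ((G.edgeFinset.filter (fun e => ∃ v ∈ R, ∃ w ∈ Rᶜ, e = s(v, w))).card : ℝ) := by
  classical
  have hrn' : r ≤ n := by
    have : (r : ℝ) ≤ n := by linarith
    exact_mod_cast this
  have hn0 : 0 < n := lt_of_lt_of_le hr0 hrn'
  set S := ∑ v ∈ R, G.degree v with hSdef
  set T := ∑ v ∈ Rᶜ, G.degree v with hTdef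
  have hsum : S + T = 2 * m := by
    rw [hSdef, hTdef, Finset.sum_add_sum_compl, ← hm,
      SimpleGraph.sum_degrees_eq_twice_card_edges]
  -- key1 : 2 * r * m ≤ n * S
  have hcomp : r * T ≤ (n - r) * S := by
    have h : ∑ v ∈ R, ∑ w ∈ Rᶜ, G.degree w ≤ ∑ v ∈ R, ∑ w ∈ Rᶜ, G.degree v := by
      refine Finset.sum_le_sum fun v hv => ?_
      refine Finset.sum_le_sum fun w hw => ?_
      exact hhigh v hv w (Finset.mem_compl.mp hw)
    have hL : ∑ v ∈ R, ∑ w ∈ Rᶜ, G.degree w = r * T := by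
      rw [Finset.sum_const, ← hTdef, hR, smul_eq_mul]
    have hRc : Rᶜ.card = n - r := by rw [Finset.card_compl, hR, hn]
    have hRr : ∀ v, ∑ _w ∈ Rᶜ, G.degree v = (n - r) * G.degree v := by
      intro v; rw [Finset.sum_const, hRc, smul_eq_mul]
    have hRR : ∑ v ∈ R, ∑ _w ∈ Rᶜ, G.degree v = (n - r) * S := by
      simp only [hRr]; rw [← Finset.mul_sum]
    rw [← hL, ← hRR]; exact h
  have key1 : 2 * r * m ≤ n * S := by
    have : n * S = (n - r) * S + r * S := by
      rw [← Nat.add_mul, Nat.sub_add_cancel hrn']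
    calc 2 * r * m = r * (T + S) := by rw [Nat.add_comm T S, hsum]; ring
    _ = r * T + r * S := by ring
    _ ≤ (n - r) * S + r * S := by omega
    _ = n * S := this.symm
  -- key2 : S ≤ H.card + r * r
  set H := G.edgeFinset.filter (fun e => ∃ v ∈ R, ∃ w ∈ Rᶜ, e = s(v, w)) with hHdef
  have hHeq : H = R.biUnion (fun v => ((Rᶜ.filter (fun w => G.Adj v w)).image
      (fun w => s(v, w)))) := by
    ext e
    simp only [hHdef, Finset.mem_filter, Finset.mem_biUnion, Finset.mem_image,
      SimpleGraph.mem_edgeFinset]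
    constructor
    · rintro ⟨he, v, hv, w, hw, rfl⟩
      exact ⟨v, hv, w, ⟨hw, he⟩, rfl⟩
    · rintro ⟨v, hv, w, hw, rfl⟩
      obtain ⟨hw1, hw2⟩ := hw
      exact ⟨hw2, v, hv, w, hw1, rfl⟩
  have hHcard : H.card = ∑ v ∈ R, (Rᶜ.filter (fun w => G.Adj v w)).card := by
    rw [hHeq, Finset.card_biUnion]
    · refine Finset.sum_congr rfl fun v hv => ?_
      rw [Finset.card_image_of_injOn]
      intro a ha b hb hab
      have ha' := Finset.mem_compl.mp (Finset.mem_filter.mp ha).1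
      rcases Sym2.eq_iff.mp hab with ⟨_, h⟩ | ⟨h1, h2⟩
      · exact h
      · exact absurd (h2 ▸ hv) ha'
    · intro v hv v' hv' hne
      simp only [Finset.disjoint_left, Finset.mem_image]
      rintro e ⟨a, ha, rfl⟩ ⟨b, hb, hab⟩
      have ha' := Finset.mem_compl.mp (Finset.mem_filter.mp ha).1
      have hb' := Finset.mem_compl.mp (Finset.mem_filter.mp hb).1
      rcases Sym2.eq_iff.mp hab with ⟨h1, _⟩ | ⟨h1, h2⟩
      · exact hne h1.symm
      · exact ha' (h1 ▸ hv')
  have hdeg : ∀ v ∈ R, G.degree v ≤ (Rᶜ.filter (fun w => G.Adj v w)).card + r := by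
    intro v hv
    have : G.degree v = (Finset.univ.filter (fun w => G.Adj v w)).card := by
      rw [← SimpleGraph.neighborFinset_eq_filter, SimpleGraph.degree]
    rw [this]
    have huniv : (Finset.univ : Finset V) = R ∪ Rᶜ := (Finset.union_compl R).symm
    calc (Finset.univ.filter (fun w => G.Adj v w)).card
        = ((R ∪ Rᶜ).filter (fun w => G.Adj v w)).card := by rw [← huniv]
      _ = (R.filter (fun w => G.Adj v w) ∪ Rᶜ.filter (fun w => G.Adj v w)).card := by
          rw [Finset.filter_union]
      _ ≤ (R.filter (fun w => G.Adj v w)).card + (Rᶜ.filter (fun w => G.Adj v w)).card :=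
          Finset.card_union_le _ _
      _ ≤ r + (Rᶜ.filter (fun w => G.Adj v w)).card := by
          gcongr; exact le_trans (Finset.card_filter_le _ _) hR.le
      _ = (Rᶜ.filter (fun w => G.Adj v w)).card + r := Nat.add_comm _ _
  have key2 : S ≤ H.card + r * r := by
    calc S ≤ ∑ v ∈ R, ((Rᶜ.filter (fun w => G.Adj v w)).card + r) :=
          Finset.sum_le_sum hdeg
      _ = H.card + r * r := by
          rw [Finset.sum_add_distrib, Finset.sum_const, hR, smul_eq_mul, hHcard]
  -- conclude over ℝ
  have hn0R : (0 : ℝ) < n := by exact_mod_cast hn0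
  have key1R : 2 * r * (m : ℝ) ≤ n * S := by exact_mod_cast key1
  have key2R : (S : ℝ) ≤ H.card + r * r := by exact_mod_cast key2
  have h1 : 2 * r * (m : ℝ) / n ≤ S := by
    rw [div_le_iff₀ hn0R]; linarith [key1R]
  have hr2 : (0 : ℝ) ≤ (r : ℝ) ^ 2 := sq_nonneg _
  nlinarith [key2R, h1]
end

section
/- Let H be a bipartite graph with parts R (of size r) and S (of size at least n/2), with at least rm/n edges, and let q ≥ 2 be an integer. If (n/2)·C(rm/n², q) > (q−1)·C(r, q) (where the binomial coefficient is extended convexly), then H contains a complete bipartite subgraph K_{q,q} with one side contained in R. -/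
open Real

/-- Convex extension of the binomial coefficient: `x(x-1)⋯(x-q+1)/q!` for
`x ≥ q - 1`, and `0` otherwise. -/
noncomputable def cBinom (x : ℝ) (q : ℕ) : ℝ :=
  if (q : ℝ) - 1 ≤ x then (∏ i ∈ Finset.range q, (x - i)) / (Nat.factorial q) else 0

/-!
Let `d b` be the number of neighbours in `R` of `b ∈ S`. Then `∑ b, C(d b, q)` counts the pairs
`(A, b)` with `A` a `q`-subset of `R` and `b` a common neighbour of `A`. The average of `d` over `S`
is at least `rm/n²`, so Jensen's inequality for the convex, monotone extension of `C(·, q)` bounds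
this sum below by `(n/2)·C(rm/n², q) > (q - 1)·C(r, q)`. Hence some `q`-subset of `R` has at least
`q` common neighbours.
-/

open Finset

lemma cBinom_eq_ite_descPochhammer (x : ℝ) (q : ℕ) :
    cBinom x q = if (q : ℝ) - 1 ≤ x then (descPochhammer ℝ q).eval x / q.factorial else 0 := by
  rw [cBinom, descPochhammer_eval_eq_prod_range]

lemma cBinom_natCast (d q : ℕ) : cBinom d q = d.choose q := by
  rw [cBinom_eq_ite_descPochhammer, Nat.cast_choose_eq_descPochhammer_div, ite_eq_left_iff, not_le,
    eq_comm, descPochhammer_eval_eq_descFactorial, div_eq_zero_iff, Nat.cast_eq_zero,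
    Nat.descFactorial_eq_zero_iff_lt]
  intro h
  exact Or.inl (by exact_mod_cast h.trans (sub_lt_self _ one_pos))

lemma cBinom_nonneg (x : ℝ) (q : ℕ) : 0 ≤ cBinom x q := by
  rw [cBinom_eq_ite_descPochhammer]
  split_ifs with h
  · exact div_nonneg (descPochhammer_nonneg h) (Nat.cast_nonneg _)
  · exact le_rfl

lemma card_mul_cBinom_le_sum_choose {ι : Type*} {t : Finset ι} (ht : t.Nonempty) (p : ι → ℕ)
    {q : ℕ} (hq : q ≠ 0) {x : ℝ} (hx : x ≤ (∑ i ∈ t, (p i : ℝ)) / #t) :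
    #t * cBinom x q ≤ ∑ i ∈ t, ((p i).choose q : ℝ) := by
  rw [cBinom_eq_ite_descPochhammer]
  split_ifs with hqx
  · have hcard : (0 : ℝ) < #t := by exact_mod_cast ht.card_pos
    have hw : ∑ i ∈ t, (#t : ℝ)⁻¹ = 1 := by
      rw [sum_const, nsmul_eq_mul, mul_inv_cancel₀ hcard.ne']
    have hjensen := descPochhammer_eval_div_factorial_le_sum_choose hq p (fun _ ↦ (#t : ℝ)⁻¹)
      (fun _ _ ↦ by positivity) hw (by rw [← mul_sum, inv_mul_eq_div]; exact hqx.trans hx)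
    rw [← mul_sum, ← mul_sum, inv_mul_eq_div, inv_mul_eq_div] at hjensen
    calc (#t : ℝ) * ((descPochhammer ℝ q).eval x / q.factorial)
        ≤ #t * ((descPochhammer ℝ q).eval ((∑ i ∈ t, (p i : ℝ)) / #t) / q.factorial) := by
          gcongr
          exact monotoneOn_descPochhammer_eval q hqx (hqx.trans hx) hx
      _ ≤ #t * ((∑ i ∈ t, ((p i).choose q : ℝ)) / #t) := by gcongr
      _ = ∑ i ∈ t, ((p i).choose q : ℝ) := mul_div_cancel₀ _ hcard.ne'
  · rw [mul_zero]; positivity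

section Bipartite

variable {α β : Type*} (E : α → β → Prop) [∀ a, DecidablePred (E a)] (R : Finset α) (S : Finset β)

lemma card_filter_product_eq_sum_card_bipartiteBelow :
    #((R ×ˢ S).filter fun p ↦ E p.1 p.2) = ∑ b ∈ S, #(R.bipartiteBelow E b) := by
  simp only [card_filter, sum_product_right, bipartiteBelow]

lemma powersetCard_bipartiteBelow (q : ℕ) (b : β) :
    (R.powersetCard q).bipartiteBelow (fun A b ↦ ∀ a ∈ A, E a b) b
      = (R.bipartiteBelow E b).powersetCard q := by
  ext A
  simp only [mem_bipartiteBelow, mem_powersetCard, subset_iff]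
  grind

/-- Both sides count the pairs `(A, b)` with `A` a `q`-subset of `R` and `b ∈ S` adjacent to
every vertex of `A`. -/
lemma sum_card_commonNeighbors_eq_sum_choose (q : ℕ) :
    ∑ A ∈ R.powersetCard q, #(S.bipartiteAbove (fun A b ↦ ∀ a ∈ A, E a b) A)
      = ∑ b ∈ S, (#(R.bipartiteBelow E b)).choose q := by
  rw [sum_card_bipartiteAbove_eq_sum_card_bipartiteBelow]
  simp only [powersetCard_bipartiteBelow, card_powersetCard]

lemma exists_complete_bipartite_of_mul_choose_lt {q : ℕ}
    (h : (q - 1) * (#R).choose q < ∑ b ∈ S, (#(R.bipartiteBelow E b)).choose q) :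
    ∃ A ⊆ R, ∃ B ⊆ S, #A = q ∧ #B = q ∧ ∀ a ∈ A, ∀ b ∈ B, E a b := by
  rw [← sum_card_commonNeighbors_eq_sum_choose, ← card_powersetCard, mul_comm, ← smul_eq_mul,
    ← sum_const] at h
  obtain ⟨A, hA, hqA⟩ := exists_lt_of_sum_lt h
  rw [mem_powersetCard] at hA
  obtain ⟨B, hB, hBcard⟩ := exists_subset_card_eq (Nat.le_of_pred_lt hqA)
  refine ⟨A, hA.1, B, hB.trans (filter_subset _ _), hA.2, hBcard, fun a ha b hb ↦ ?_⟩
  exact ((mem_bipartiteAbove _).1 (hB hb)).2 a ha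

end Bipartite

theorem stmt4_general {α β : Type*}
    (E : α → β → Prop) [∀ a, DecidablePred (E a)]
    (R : Finset α) (S : Finset β) (n m : ℝ) (r q : ℕ)
    (hn : 0 < n) (hm : 0 < m) (hq : 2 ≤ q)
    (hr : R.card = r)
    (hS1 : n / 2 ≤ (S.card : ℝ)) (hS2 : (S.card : ℝ) ≤ n)
    (hedges : r * m / n ≤ (((R ×ˢ S).filter (fun p => E p.1 p.2)).card : ℝ))
    (hcount : (n / 2) * cBinom (r * m / n ^ 2) q > (q - 1 : ℝ) * cBinom r q) :
    ∃ A ⊆ R, ∃ B ⊆ S, A.card = q ∧ B.card = q ∧ ∀ a ∈ A, ∀ b ∈ B, E a b := by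
  set d : β → ℕ := fun b ↦ #(R.bipartiteBelow E b)
  have hSpos : (0 : ℝ) < #S := by linarith
  have havg : r * m / n ^ 2 ≤ (∑ b ∈ S, (d b : ℝ)) / #S := by
    rw [← Nat.cast_sum, ← card_filter_product_eq_sum_card_bipartiteBelow]
    calc r * m / n ^ 2 = (r * m / n) / n := by rw [div_div, sq]
      _ ≤ (r * m / n) / #S := by gcongr
      _ ≤ _ := by gcongr
  have hjensen := card_mul_cBinom_le_sum_choose (q := q) (card_pos.1 (by exact_mod_cast hSpos)) d
    (by omega) havg
  apply exists_complete_bipartite_of_mul_choose_lt E R S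
  rw [hr]
  have hlt : (((q - 1) * r.choose q : ℕ) : ℝ) < ((∑ b ∈ S, (d b).choose q : ℕ) : ℝ) := by
    push_cast [Nat.cast_sub (by omega : 1 ≤ q)]
    rw [← cBinom_natCast]
    calc ((q : ℝ) - 1) * cBinom r q < n / 2 * cBinom (r * m / n ^ 2) q := hcount
      _ ≤ #S * cBinom (r * m / n ^ 2) q := by gcongr; exact cBinom_nonneg ..
      _ ≤ _ := hjensen
  exact_mod_cast hlt

theorem stmt4 {α β : Type*} [Fintype α] [Fintype β] [DecidableEq α] [DecidableEq β]
    (E : α → β → Prop) [∀ a, DecidablePred (E a)]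
    (R : Finset α) (S : Finset β) (n m : ℝ) (r q : ℕ)
    (hn : 0 < n) (hm : 0 < m) (hq : 2 ≤ q)
    (hr : R.card = r)
    (hS1 : n / 2 ≤ (S.card : ℝ)) (hS2 : (S.card : ℝ) ≤ n)
    (hedges : r * m / n ≤ (((R ×ˢ S).filter (fun p => E p.1 p.2)).card : ℝ))
    (hcount : (n / 2) * cBinom (r * m / n ^ 2) q > (q - 1 : ℝ) * cBinom r q) :
    ∃ A ⊆ R, ∃ B ⊆ S, A.card = q ∧ B.card = q ∧ ∀ a ∈ A, ∀ b ∈ B, E a b :=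
  stmt4_general E R S n m r q hn hm hq hr hS1 hS2 hedges hcount
end

section
/- Let s = Σ_{v∈S} C(deg(v), q) where S is one side of a bipartite graph H with other side R of size r. If s > (q−1)·C(r,q), then there exists a q-element subset C ⊆ R whose common neighborhood in S has size at least q; consequently H contains K_{q,q}. -/
/-!
Double counting the pairs (C, v) with C a q-subset of R and v ∈ S adjacent to all of C: the
hypothesis says there are more than (q-1)·C(r,q) such pairs, so some q-subset C of R has at least
q common neighbours, and any q of them span a K_{q,q} with C.
-/

open Finset

namespace Finset

variable {α β : Type*}

theorem powersetCard_filter (R : Finset α) (p : α → Prop) [DecidablePred p]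
    [∀ C : Finset α, Decidable (∀ a ∈ C, p a)] (q : ℕ) :
    (R.filter p).powersetCard q = (R.powersetCard q).filter (fun C => ∀ a ∈ C, p a) := by
  ext C
  simp only [mem_powersetCard, mem_filter, subset_iff]
  aesop

/- Deciding `∀ a ∈ C, E a v` is left to an instance argument: callers with `[Fintype α]` in scope
synthesize it through `Fintype.decidableForallFintype`, not `Finset.decidableDforallFinset`. -/
theorem sum_choose_card_filter_eq_sum_card_commonNeighbors (E : α → β → Prop)
    [∀ a, DecidablePred (E a)] [∀ C : Finset α, DecidablePred fun v => ∀ a ∈ C, E a v]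
    (R : Finset α) (S : Finset β) (q : ℕ) :
    ∑ v ∈ S, (#(R.filter (fun a => E a v))).choose q
      = ∑ C ∈ R.powersetCard q, #(S.filter (fun v => ∀ a ∈ C, E a v)) := by
  calc ∑ v ∈ S, (#(R.filter (fun a => E a v))).choose q
      = ∑ v ∈ S, #((R.powersetCard q).filter (fun C => ∀ a ∈ C, E a v)) := by
        simp only [← card_powersetCard, powersetCard_filter]
    _ = ∑ C ∈ R.powersetCard q, #(S.filter (fun v => ∀ a ∈ C, E a v)) := by
        simp only [card_filter]
        exact sum_comm

theorem exists_card_commonNeighbors_ge (E : α → β → Prop) [∀ a, DecidablePred (E a)]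
    [∀ C : Finset α, DecidablePred fun v => ∀ a ∈ C, E a v] (R : Finset α) (S : Finset β) (q : ℕ)
    (hcount : (q - 1) * (#R).choose q < ∑ v ∈ S, (#(R.filter (fun a => E a v))).choose q) :
    ∃ C ∈ R.powersetCard q, q ≤ #(S.filter (fun v => ∀ a ∈ C, E a v)) := by
  rw [sum_choose_card_filter_eq_sum_card_commonNeighbors] at hcount
  have hconst : ∑ _C ∈ R.powersetCard q, (q - 1) = (q - 1) * (#R).choose q := by
    rw [sum_const, card_powersetCard, smul_eq_mul, mul_comm]
  obtain ⟨C, hC, hlt⟩ := exists_lt_of_sum_lt (hconst ▸ hcount)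
  exact ⟨C, hC, by omega⟩

end Finset

theorem stmt5_general {α β : Type*} [Fintype α] [DecidableEq α]
    (E : α → β → Prop) [∀ a, DecidablePred (E a)]
    (R : Finset α) (S : Finset β) (r q : ℕ) (hr : R.card = r)
    (hcount : (q - 1) * r.choose q <
      ∑ v ∈ S, ((R.filter (fun a => E a v)).card).choose q) :
    ∃ C ⊆ R, C.card = q ∧ q ≤ (S.filter (fun v => ∀ a ∈ C, E a v)).card ∧
      ∃ D ⊆ S, D.card = q ∧ ∀ a ∈ C, ∀ b ∈ D, E a b := by
  subst hr
  obtain ⟨C, hC, hcommon⟩ := exists_card_commonNeighbors_ge E R S q hcount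
  obtain ⟨hCR, hCcard⟩ := mem_powersetCard.mp hC
  obtain ⟨D, hD, hDcard⟩ := exists_subset_card_eq hcommon
  exact ⟨C, hCR, hCcard, hcommon, D, hD.trans (filter_subset _ _), hDcard,
    fun a ha b hb => (mem_filter.mp (hD hb)).2 a ha⟩

theorem stmt5 {α β : Type*} [Fintype α] [Fintype β] [DecidableEq α] [DecidableEq β]
    (E : α → β → Prop) [∀ a, DecidablePred (E a)]
    (R : Finset α) (S : Finset β) (r q : ℕ) (hq : 1 ≤ q) (hr : R.card = r)
    (hcount : (q - 1) * r.choose q <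
      ∑ v ∈ S, ((R.filter (fun a => E a v)).card).choose q) :
    ∃ C ⊆ R, C.card = q ∧ q ≤ (S.filter (fun v => ∀ a ∈ C, E a v)).card ∧
      ∃ D ⊆ S, D.card = q ∧ ∀ a ∈ C, ∀ b ∈ D, E a b :=
  stmt5_general E R S r q hr hcount
end

section
/- Every graph G with n vertices and m ≥ 3n^{3/2} edges (n sufficiently large) contains a complete balanced bipartite subgraph K_{q,q} with q = ⌊ln(n/2)/ln(2en²/m)⌋. -/
/-!
Kővári–Sós–Turán double counting. Each vertex `v` contributes `C(d_v, q)` pairs `(v, S)` with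
`S` a `q`-subset of its neighbourhood; if there are more than `(q - 1) C(n, q)` such pairs, some
`S` lies in `q` neighbourhoods, which gives a `K_{q,q}`. By the power-mean inequality,
`q! ∑ C(d_v, q) ≥ ∑ (d_v - q)^q ≥ (2m - nq)^q / n^(q-1) ≥ m^q / n^(q-1)` as soon as `nq ≤ m`,
while `q! (q - 1) C(n, q) < q n^q`. The choice of `q` makes `2 (2e n²/m)^q ≤ n`, which is
exactly what is needed to compare the two bounds, and it also gives `q ≤ √n`, whence `nq ≤ m`.
-/

open Finset Fintype Nat Real

theorem Nat.sub_pow_le_factorial_mul_choose (n k : ℕ) : (n - k) ^ k ≤ k ! * n.choose k :=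
  calc (n - k) ^ k ≤ (n + 1 - k) ^ k := Nat.pow_le_pow_left (by omega) k
    _ ≤ n.descFactorial k := Nat.pow_sub_le_descFactorial n k
    _ = k ! * n.choose k := Nat.descFactorial_eq_factorial_mul_choose n k

theorem Nat.factorial_mul_choose_le_pow (n k : ℕ) : k ! * n.choose k ≤ n ^ k :=
  Nat.descFactorial_eq_factorial_mul_choose n k ▸ Nat.descFactorial_le_pow n k

namespace SimpleGraph

variable {V : Type*} [Fintype V] (G : SimpleGraph V) [DecidableRel G.Adj]

theorem card_edgeFinset_le_card_sq_div_two : (#G.edgeFinset : ℝ) ≤ card V ^ 2 / 2 := by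
  have h : (#G.edgeFinset : ℝ) ≤ (card V).choose 2 := by
    exact_mod_cast G.card_edgeFinset_le_card_choose_two
  rw [Nat.cast_choose_two] at h
  nlinarith [(card V).cast_nonneg (α := ℝ)]

theorem sum_choose_degree_eq_sum_card_filter_subset_neighborFinset [DecidableEq V] (q : ℕ) :
    ∑ v, (G.degree v).choose q =
      ∑ S ∈ powersetCard q univ, #{v | S ⊆ G.neighborFinset v} := by
  have hv (v : V) :
      (G.degree v).choose q = #{S ∈ powersetCard q univ | S ⊆ G.neighborFinset v} := by
    rw [← card_neighborFinset_eq_degree, ← card_powersetCard]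
    congr 1
    ext S
    simp only [mem_powersetCard, mem_filter, subset_univ, true_and]
    tauto
  simp only [hv, card_filter]
  exact sum_comm

theorem exists_isCompleteBetween_of_mul_choose_lt_sum_choose_degree [DecidableEq V] (q : ℕ)
    (h : (q - 1) * (card V).choose q < ∑ v, (G.degree v).choose q) :
    ∃ A B : Finset V, #A = q ∧ #B = q ∧ G.IsCompleteBetween A B := by
  have hsum : ∑ _ ∈ powersetCard q (univ : Finset V), (q - 1) <
      ∑ S ∈ powersetCard q univ, #{v | S ⊆ G.neighborFinset v} := by
    rwa [sum_const, card_powersetCard, Finset.card_univ, smul_eq_mul, mul_comm,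
      ← sum_choose_degree_eq_sum_card_filter_subset_neighborFinset]
  obtain ⟨B, hB, hlt⟩ := exists_lt_of_sum_lt hsum
  obtain ⟨A, hAB, rfl⟩ :=
    exists_subset_card_eq (show q ≤ #{v | B ⊆ G.neighborFinset v} by omega)
  refine ⟨A, B, rfl, (mem_powersetCard.mp hB).2, fun a ha b hb => ?_⟩
  exact (G.mem_neighborFinset a b).mp ((mem_filter.mp (hAB ha)).2 hb)

theorem two_mul_card_edgeFinset_sub_le_sum_degree_sub (q : ℕ) :
    2 * #G.edgeFinset - card V * q ≤ ∑ v, (G.degree v - q) := by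
  rw [tsub_le_iff_right, ← sum_degrees_eq_twice_card_edges, ← Finset.card_univ, ← smul_eq_mul,
    ← sum_const, ← sum_add_distrib]
  exact sum_le_sum fun v _ => le_tsub_add

theorem sub_pow_le_card_pow_mul_factorial_mul_sum_choose_degree (p : ℕ) :
    (2 * #G.edgeFinset - card V * (p + 1)) ^ (p + 1) ≤
      card V ^ p * ((p + 1)! * ∑ v, (G.degree v).choose (p + 1)) :=
  calc (2 * #G.edgeFinset - card V * (p + 1)) ^ (p + 1)
      ≤ (∑ v, (G.degree v - (p + 1))) ^ (p + 1) :=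
        Nat.pow_le_pow_left (G.two_mul_card_edgeFinset_sub_le_sum_degree_sub _) _
    _ ≤ card V ^ p * ∑ v, (G.degree v - (p + 1)) ^ (p + 1) :=
        pow_sum_le_card_mul_sum_pow (fun _ _ => Nat.zero_le _) p
    _ ≤ card V ^ p * ((p + 1)! * ∑ v, (G.degree v).choose (p + 1)) := by
        gcongr
        rw [mul_sum]
        exact sum_le_sum fun v _ => Nat.sub_pow_le_factorial_mul_choose _ _

theorem exists_isCompleteBetween_of_mul_pow_lt [DecidableEq V] (q : ℕ)
    (hq : card V * q ≤ #G.edgeFinset)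
    (h : (q - 1) * card V ^ (2 * q) < card V * #G.edgeFinset ^ q) :
    ∃ A B : Finset V, #A = q ∧ #B = q ∧ G.IsCompleteBetween A B := by
  cases q with
  | zero => exact ⟨∅, ∅, rfl, rfl, by simp [IsCompleteBetween]⟩
  | succ p =>
    apply exists_isCompleteBetween_of_mul_choose_lt_sum_choose_degree
    set n := card V
    set m := #G.edgeFinset
    set T := ∑ v, (G.degree v).choose (p + 1)
    have hn : 0 < n := Nat.pos_of_ne_zero fun h0 => by simp [h0] at h
    -- the target inequality `(q - 1) C(n, q) < T`, multiplied by `n · q! · n^(q-1)`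
    have hcount : n * ((p + 1)! * n ^ p * (p * n.choose (p + 1))) <
        n * ((p + 1)! * n ^ p * T) :=
      calc n * ((p + 1)! * n ^ p * (p * n.choose (p + 1)))
          = p * n ^ (p + 1) * ((p + 1)! * n.choose (p + 1)) := by ring
        _ ≤ p * n ^ (p + 1) * n ^ (p + 1) := by gcongr; exact factorial_mul_choose_le_pow _ _
        _ = (p + 1 - 1) * n ^ (2 * (p + 1)) := by rw [Nat.add_sub_cancel]; ring
        _ < n * m ^ (p + 1) := h
        _ ≤ n * (2 * m - n * (p + 1)) ^ (p + 1) := by gcongr; omega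
        _ ≤ n * (n ^ p * ((p + 1)! * T)) := by
          gcongr; exact G.sub_pow_le_card_pow_mul_factorial_mul_sum_choose_degree p
        _ = n * ((p + 1)! * n ^ p * T) := by ring
    rw [Nat.add_sub_cancel]
    exact Nat.lt_of_mul_lt_mul_left (Nat.lt_of_mul_lt_mul_left hcount)

end SimpleGraph

namespace Real

theorem pow_floor_log_div_log_le {x y : ℝ} (hx : 1 < x) (hy : 1 ≤ y) :
    x ^ ⌊log y / log x⌋₊ ≤ y := by
  have hlogx : 0 < log x := log_pos hx
  have hfloor : (⌊log y / log x⌋₊ : ℝ) * log x ≤ log y :=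
    (le_div_iff₀ hlogx).mp (Nat.floor_le (div_nonneg (log_nonneg hy) hlogx.le))
  rw [← log_le_log_iff (by positivity) (by linarith), log_pow]
  exact hfloor

theorem log_le_two_mul_sqrt {x : ℝ} (hx : 0 ≤ x) : log x ≤ 2 * √x := by
  have := log_le_rpow_div hx (ε := 1 / 2) (by norm_num)
  rwa [← sqrt_eq_rpow, div_eq_mul_inv, one_div, inv_inv, mul_comm] at this

theorem floor_log_div_log_le_sqrt {x y : ℝ} (hx : 2 ≤ log x) (hy : 1 ≤ y) :
    (⌊log y / log x⌋₊ : ℝ) ≤ √y :=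
  calc (⌊log y / log x⌋₊ : ℝ) ≤ log y / log x :=
        Nat.floor_le (div_nonneg (log_nonneg hy) (by linarith))
    _ ≤ log y / 2 := div_le_div_of_nonneg_left (log_nonneg hy) two_pos hx
    _ ≤ √y := by linarith [log_le_two_mul_sqrt (by linarith : (0:ℝ) ≤ y)]

theorem two_le_log_two_mul_exp_one_mul_sq_div {n m : ℝ} (hm : 0 < m) (hmn : m ≤ n ^ 2 / 2) :
    2 ≤ log (2 * exp 1 * n ^ 2 / m) := by
  have he : exp 1 ≤ 4 := by linarith [exp_one_lt_d9]
  have hn : 2 * m ≤ n ^ 2 := by linarith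
  rw [le_log_iff_exp_le (div_pos (mul_pos (by positivity) (by linarith)) hm), le_div_iff₀ hm,
    show (2 : ℝ) = 1 + 1 by norm_num, exp_add]
  calc exp 1 * exp 1 * m ≤ 4 * exp 1 * m := by gcongr
    _ ≤ (1 + 1) * exp 1 * n ^ 2 := by nlinarith [exp_pos 1]

theorem mul_pow_lt_of_two_mul_pow_le {n m : ℝ} {q : ℕ} (hn : 0 < n) (hm : 0 < m)
    (h : 2 * (2 * exp 1 * n ^ 2 / m) ^ q ≤ n) : q * n ^ (2 * q) < n * m ^ q := by
  have hq : (q : ℝ) < 2 * (2 * exp 1) ^ q :=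
    calc (q : ℝ) < 2 ^ q := by exact_mod_cast Nat.lt_two_pow_self
      _ ≤ (2 * exp 1) ^ q := by gcongr; linarith [add_one_le_exp (1 : ℝ)]
      _ < 2 * (2 * exp 1) ^ q := by linarith [pow_pos (by positivity : (0 : ℝ) < 2 * exp 1) q]
  calc q * n ^ (2 * q) < 2 * (2 * exp 1) ^ q * n ^ (2 * q) := by gcongr
    _ = 2 * ((2 * exp 1 * n ^ 2 / m) ^ q * m ^ q) := by
      rw [div_pow, div_mul_cancel₀ _ (by positivity), mul_pow _ (n ^ 2), ← pow_mul, mul_assoc]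
    _ = 2 * (2 * exp 1 * n ^ 2 / m) ^ q * m ^ q := by ring
    _ ≤ n * m ^ q := by gcongr

end Real

theorem Nat.sub_one_mul_pow_lt_of_two_mul_pow_le {n m q : ℕ} (hn : 0 < n) (hm : 0 < m)
    (h : 2 * (2 * exp 1 * n ^ 2 / m) ^ q ≤ (n : ℝ)) : (q - 1) * n ^ (2 * q) < n * m ^ q := by
  have hreal := mul_pow_lt_of_two_mul_pow_le (by exact_mod_cast hn) (by exact_mod_cast hm) h
  have hsub : ((q - 1 : ℕ) : ℝ) ≤ q := by exact_mod_cast Nat.sub_le q 1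
  exact_mod_cast (mul_le_mul_of_nonneg_right hsub (by positivity)).trans_lt hreal

theorem stmt10 :
    ∃ N : ℕ, ∀ n : ℕ, N ≤ n → ∀ (V : Type) [Fintype V] [DecidableEq V]
      (G : SimpleGraph V) [DecidableRel G.Adj] (m : ℕ),
      Fintype.card V = n → G.edgeFinset.card = m → 3 * (n : ℝ) ^ ((3:ℝ)/2) ≤ m →
      ∀ q : ℕ, q = ⌊Real.log (n / 2) / Real.log (2 * Real.exp 1 * n ^ 2 / m)⌋₊ →
      ∃ A B : Finset V, Disjoint A B ∧ A.card = q ∧ B.card = q ∧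
        ∀ a ∈ A, ∀ b ∈ B, G.Adj a b := by
  refine ⟨4, fun n hn V _ _ G _ m hcard hedge hm q hq => ?_⟩
  subst hcard hedge
  have hn4 : (4 : ℝ) ≤ card V := by exact_mod_cast hn
  have hn32 : (card V : ℝ) ^ ((3 : ℝ) / 2) = card V * √(card V) := by
    rw [sqrt_eq_rpow, ← rpow_one_add' (by positivity) (by norm_num)]
    norm_num
  rw [hn32] at hm
  have hm0 : (0 : ℝ) < #G.edgeFinset := lt_of_lt_of_le (by positivity) hm
  have hlog := two_le_log_two_mul_exp_one_mul_sq_div hm0 G.card_edgeFinset_le_card_sq_div_two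
  have hq_le : (q : ℝ) ≤ √(card V) := by
    rw [hq]
    exact (floor_log_div_log_le_sqrt hlog (by linarith)).trans (sqrt_le_sqrt (by linarith))
  have hpow : 2 * (2 * exp 1 * card V ^ 2 / #G.edgeFinset) ^ q ≤ (card V : ℝ) := by
    have hx : 1 < 2 * exp 1 * card V ^ 2 / #G.edgeFinset :=
      (log_pos_iff (by positivity)).mp (by linarith)
    have := pow_floor_log_div_log_le hx (by linarith : (1 : ℝ) ≤ card V / 2)
    rw [← hq] at this
    linarith
  have hdeg : card V * q ≤ #G.edgeFinset := by
    have : (card V * q : ℝ) ≤ #G.edgeFinset := by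
      nlinarith [sqrt_nonneg (card V : ℝ)]
    exact_mod_cast this
  have hcount := Nat.sub_one_mul_pow_lt_of_two_mul_pow_le (by omega) (by exact_mod_cast hm0) hpow
  obtain ⟨A, B, hA, hB, hAB⟩ := G.exists_isCompleteBetween_of_mul_pow_lt q hdeg hcount
  exact ⟨A, B, Finset.disjoint_coe.mp hAB.disjoint, hA, hB, fun a ha b hb => hAB ha hb⟩
end

section
/- Every graph G with n vertices and m ≥ εn² edges (ε > 0 fixed, n sufficiently large) contains a complete balanced bipartite subgraph with parts of size at least c_ε · ln n, where c_ε > 0 depends only on ε. -/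
set_option maxRecDepth 4000
set_option maxHeartbeats 4000000
open Finset

lemma key_lemma {V : Type} [Fintype V] [DecidableEq V] (G : SimpleGraph V) [DecidableRel G.Adj]
    (t : ℕ)
    (h : (t - 1) * (Fintype.card V).choose t < ∑ v : V, (G.degree v).choose t) :
    ∃ A B : Finset V, Disjoint A B ∧ A.card = t ∧ B.card = t ∧
      ∀ a ∈ A, ∀ b ∈ B, G.Adj a b := by
  classical
  set 𝒯 := (Finset.univ : Finset V).powersetCard t with h𝒯
  have hdc : ∑ T ∈ 𝒯, (univ.filter (fun v => T ⊆ G.neighborFinset v)).card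
      = ∑ v : V, (G.degree v).choose t := by
    calc ∑ T ∈ 𝒯, (univ.filter (fun v => T ⊆ G.neighborFinset v)).card
        = ∑ T ∈ 𝒯, ∑ v : V, if T ⊆ G.neighborFinset v then 1 else 0 := by
          simp only [Finset.card_filter]
      _ = ∑ v : V, ∑ T ∈ 𝒯, if T ⊆ G.neighborFinset v then 1 else 0 := Finset.sum_comm
      _ = ∑ v : V, (𝒯.filter (fun T => T ⊆ G.neighborFinset v)).card := by
          simp only [Finset.card_filter]
      _ = ∑ v : V, (G.degree v).choose t := by
          refine Finset.sum_congr rfl fun v _ => ?_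
          have hset : 𝒯.filter (fun T => T ⊆ G.neighborFinset v)
              = (G.neighborFinset v).powersetCard t := by
            ext T
            simp only [h𝒯, Finset.mem_filter, Finset.mem_powersetCard]
            constructor
            · rintro ⟨⟨-, hc⟩, hs⟩; exact ⟨hs, hc⟩
            · rintro ⟨hs, hc⟩; exact ⟨⟨Finset.subset_univ _, hc⟩, hs⟩
          rw [hset, Finset.card_powersetCard, SimpleGraph.card_neighborFinset_eq_degree]
  have h2 : ∃ T ∈ 𝒯, t ≤ (univ.filter (fun v => T ⊆ G.neighborFinset v)).card := by
    by_contra hcon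
    push_neg at hcon
    have hb := Finset.sum_le_card_nsmul 𝒯
      (fun T => (univ.filter (fun v => T ⊆ G.neighborFinset v)).card) (t - 1)
      (fun T hT => Nat.le_sub_one_of_lt (hcon T hT))
    rw [hdc] at hb
    have hcard𝒯 : 𝒯.card = (Fintype.card V).choose t := by
      rw [h𝒯, Finset.card_powersetCard, Finset.card_univ]
    rw [hcard𝒯, smul_eq_mul, mul_comm] at hb
    exact absurd hb (not_le.2 h)
  obtain ⟨T, hT𝒯, hTcard⟩ := h2
  obtain ⟨A, hAsub, hAcard⟩ := Finset.exists_subset_card_eq hTcard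
  have hTt : T.card = t := (Finset.mem_powersetCard.1 hT𝒯).2
  refine ⟨A, T, ?_, hAcard, hTt, ?_⟩
  · rw [Finset.disjoint_left]
    intro a haA haT
    have h1 : T ⊆ G.neighborFinset a := (Finset.mem_filter.1 (hAsub haA)).2
    exact G.irrefl ((SimpleGraph.mem_neighborFinset G a a).1 (h1 haT))
  · intro a haA b hbT
    exact (SimpleGraph.mem_neighborFinset G a b).1
      ((Finset.mem_filter.1 (hAsub haA)).2 hbT)

theorem stmt11 :
    ∀ ε : ℝ, 0 < ε → ∃ c : ℝ, 0 < c ∧ ∃ N : ℕ, ∀ n : ℕ, N ≤ n →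
      ∀ (V : Type) [Fintype V] [DecidableEq V]
        (G : SimpleGraph V) [DecidableRel G.Adj],
        Fintype.card V = n → ε * n ^ 2 ≤ (G.edgeFinset.card : ℝ) →
        ∃ A B : Finset V, Disjoint A B ∧ A.card = B.card ∧
          c * Real.log n ≤ (A.card : ℝ) ∧ ∀ a ∈ A, ∀ b ∈ B, G.Adj a b := by
  intro ε hε
  set ε' : ℝ := min ε 4⁻¹ with hε'def
  have hε'0 : 0 < ε' := lt_min hε (by norm_num)
  have hε'le : ε' ≤ 4⁻¹ := min_le_right _ _
  have hε'ε : ε' ≤ ε := min_le_left _ _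
  have h2ε' : (1:ℝ) < 2/ε' := by
    rw [lt_div_iff₀ hε'0]; linarith
  set L : ℝ := Real.log (2/ε') with hLdef
  have hL0 : 0 < L := Real.log_pos h2ε'
  set c : ℝ := (2*L)⁻¹ with hcdef
  have hc0 : 0 < c := by positivity
  have hcL : c * L = 1/2 := by
    rw [hcdef]; field_simp
  set q₀ : ℝ := 2*(4*c+3)/ε'^2 + 1 with hq₀def
  have hq₀1 : 1 ≤ q₀ := by
    rw [hq₀def]
    have : 0 ≤ 2*(4*c+3)/ε'^2 := by positivity
    linarith
  clear_value ε' L c q₀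
  refine ⟨c, hc0, max 2 ⌈q₀^4⌉₊, ?_⟩
  intro n hn V _ _ G _ hcard hm
  have hn2 : 2 ≤ n := le_trans (le_max_left _ _) hn
  have hn0 : (0:ℝ) < n := by
    have : (2:ℝ) ≤ n := by exact_mod_cast hn2
    linarith
  have hnq : q₀^4 ≤ (n:ℝ) := by
    have h1 : ⌈q₀^4⌉₊ ≤ n := le_trans (le_max_right _ _) hn
    exact le_trans (Nat.le_ceil _) (by exact_mod_cast h1)
  set q : ℝ := Real.sqrt (Real.sqrt n) with hqdef
  have hsq : Real.sqrt n = q^2 := by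
    rw [hqdef, Real.sq_sqrt (Real.sqrt_nonneg _)]
  have hnq4 : (n:ℝ) = q^4 := by
    have h1 : (q^2)^2 = (n:ℝ) := by
      rw [← hsq, Real.sq_sqrt hn0.le]
    nlinarith [h1]
  have hq₀q : q₀ ≤ q := by
    have h1 : q₀^2 ≤ Real.sqrt n := by
      have h2 : Real.sqrt (q₀^4) ≤ Real.sqrt n := Real.sqrt_le_sqrt hnq
      rwa [show q₀^4 = (q₀^2)^2 by ring, Real.sqrt_sq (by positivity)] at h2
    have h3 := Real.sqrt_le_sqrt h1
    rwa [Real.sqrt_sq (by positivity)] at h3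
  have hq1 : 1 ≤ q := le_trans hq₀1 hq₀q
  have hq0 : 0 < q := lt_of_lt_of_le one_pos hq1
  have hlogq : Real.log n = 4 * Real.log q := by
    rw [hqdef, Real.log_sqrt (Real.sqrt_nonneg _), Real.log_sqrt hn0.le]; ring
  have hlog4q : Real.log n ≤ 4 * q := by
    rw [hlogq]
    have := Real.log_le_sub_one_of_pos hq0
    linarith
  clear_value q
  have hlogn0 : 0 < Real.log n := Real.log_pos (by exact_mod_cast hn2)
  set t : ℕ := ⌈c * Real.log n⌉₊ with htdef
  have ht1 : 1 ≤ t := Nat.one_le_ceil_iff.2 (by positivity)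
  have htlb : c * Real.log n ≤ (t:ℝ) := Nat.le_ceil _
  have htlt : (t:ℝ) < c * Real.log n + 1 := Nat.ceil_lt_add_one (by positivity)
  clear_value t
  have htub : (t:ℝ) ≤ (4*c+1) * q := by
    nlinarith [mul_le_mul_of_nonneg_left hlog4q hc0.le]
  have hqM : (4*c+3) * 2 ≤ ε'^2 * q := by
    have hqbig : 2*(4*c+3)/ε'^2 ≤ q := by
      have := hq₀q; rw [hq₀def] at this; linarith
    rw [div_le_iff₀ (by positivity)] at hqbig
    linarith
  have hq3 : 1 ≤ q^3 := one_le_pow₀ hq1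
  have cond3 : ((4*c+1)*q) * Real.sqrt n + 1 ≤ (ε'/2) * (ε' * n - 1) := by
    rw [hsq, hnq4]
    nlinarith [mul_le_mul_of_nonneg_right hqM (pow_nonneg hq0.le 3), hq3, hε'le, hε'0, hq1]
  have cond2 : (t:ℝ) ≤ ε' * n / 2 := by
    rw [hnq4]
    have e1 : (4*c+3) * 2 * q^3 ≤ ε'^2 * q * q^3 :=
      mul_le_mul_of_nonneg_right hqM (by positivity)
    have e2 : ε'^2 * q * q^3 ≤ ε' * q^4 := by nlinarith [mul_nonneg (mul_nonneg hε'0.le (pow_nonneg hq0.le 4)) (show (0:ℝ) ≤ 1 - ε' by linarith)]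
    have e3 : q ≤ q^3 := by nlinarith
    have e4 : (4*c+1) * q ≤ (4*c+3) * q^3 := by nlinarith
    linarith
  have hεn2 : (2:ℝ) ≤ ε' * n := by
    have : (1:ℝ) ≤ t := by exact_mod_cast ht1
    linarith
  -- degrees
  set d₀ : ℕ := ⌈ε' * n⌉₊ with hd₀def
  have hd₀lb : ε' * n ≤ (d₀:ℝ) := Nat.le_ceil _
  have hd₀ub : (d₀:ℝ) < ε' * n + 1 := Nat.ceil_lt_add_one (by positivity)
  clear_value d₀
  have htd : t ≤ d₀ := by
    have : (t:ℝ) ≤ (d₀:ℝ) := by linarith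
    exact_mod_cast this
  set H : Finset V := univ.filter (fun v => d₀ ≤ G.degree v) with hHdef
  set k : ℕ := H.card with hkdef
  have hdeg_le : ∀ v : V, G.degree v ≤ n := by
    intro v
    rw [← hcard, ← SimpleGraph.card_neighborFinset_eq_degree, ← Finset.card_univ]
    exact Finset.card_le_card (Finset.subset_univ _)
  have hsplit : ∑ v : V, G.degree v ≤ k * n + n * d₀ := by
    rw [← Finset.sum_filter_add_sum_filter_not univ (fun v => d₀ ≤ G.degree v)]
    have b1 : ∑ v ∈ H, G.degree v ≤ k * n := by
      have := Finset.sum_le_card_nsmul H (fun v => G.degree v) n (fun v _ => hdeg_le v)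
      simpa [hkdef] using this
    have b2 : ∑ v ∈ univ.filter (fun v => ¬ d₀ ≤ G.degree v), G.degree v ≤ n * d₀ := by
      have h1 := Finset.sum_le_card_nsmul (univ.filter (fun v => ¬ d₀ ≤ G.degree v))
        (fun v => G.degree v) d₀ (fun v hv => le_of_not_ge (Finset.mem_filter.1 hv).2)
      have h2 : (univ.filter (fun v => ¬ d₀ ≤ G.degree v)).card ≤ n := by
        rw [← hcard, ← Finset.card_univ]
        exact Finset.card_le_card (Finset.filter_subset _ _)
      calc ∑ v ∈ univ.filter (fun v => ¬ d₀ ≤ G.degree v), G.degree v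
          ≤ (univ.filter (fun v => ¬ d₀ ≤ G.degree v)).card * d₀ := by simpa using h1
        _ ≤ n * d₀ := Nat.mul_le_mul_right _ h2
    exact Nat.add_le_add b1 b2
  have hkR : ε' * n - 1 ≤ (k:ℝ) := by
    have h2m : 2 * (ε' * (n:ℝ)^2) ≤ ((∑ v : V, G.degree v : ℕ) : ℝ) := by
      rw [SimpleGraph.sum_degrees_eq_twice_card_edges]
      push_cast
      have : ε' * (n:ℝ)^2 ≤ ε * n^2 := by nlinarith
      linarith
    have hsplitR : ((∑ v : V, G.degree v : ℕ) : ℝ) ≤ k * n + n * d₀ := by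
      exact_mod_cast hsplit
    nlinarith [hn0, hd₀ub]
  have hk0 : (1:ℝ) ≤ (k:ℝ) := by linarith
  have hS : k * d₀.choose t ≤ ∑ v : V, (G.degree v).choose t := by
    calc k * d₀.choose t = ∑ _v ∈ H, d₀.choose t := by
          rw [Finset.sum_const, smul_eq_mul, hkdef]
      _ ≤ ∑ v ∈ H, (G.degree v).choose t :=
          Finset.sum_le_sum fun v hv => Nat.choose_le_choose t (Finset.mem_filter.1 hv).2
      _ ≤ ∑ v : V, (G.degree v).choose t :=
          Finset.sum_le_sum_of_subset (Finset.subset_univ H)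
  clear_value k
  clear hkdef hsplit hHdef
  -- the strict numeric inequality, in ℕ
  have hcastsub : ((d₀ + 1 - t : ℕ) : ℝ) = (d₀:ℝ) + 1 - t := by
    have : t ≤ d₀ + 1 := le_trans htd (Nat.le_succ _)
    push_cast [Nat.cast_sub this]
    ring
  have hdiff : ε' * n / 2 ≤ ((d₀ + 1 - t : ℕ) : ℝ) := by
    rw [hcastsub]; linarith
  have hpow : (ε'/2) / Real.sqrt n ≤ (ε'/2)^t := by
    have he : ε'/2 = Real.exp (-L) := by
      rw [hLdef, Real.exp_neg, Real.exp_log (by positivity), inv_div]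
    have h1 : (ε'/2)^t = Real.exp (-((t:ℝ)*L)) := by
      rw [he, ← Real.exp_nat_mul]
      ring_nf
    have h2 : (t:ℝ) * L ≤ Real.log n / 2 + L := by
      nlinarith [mul_le_mul_of_nonneg_right htlt.le hL0.le]
    have h3 : Real.exp (Real.log n / 2) = Real.sqrt n := by
      rw [← Real.log_sqrt hn0.le, Real.exp_log (Real.sqrt_pos.2 hn0)]
    rw [h1]
    have h4 : Real.exp (-(Real.log n / 2 + L)) ≤ Real.exp (-((t:ℝ)*L)) :=
      Real.exp_le_exp.2 (neg_le_neg h2)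
    calc (ε'/2) / Real.sqrt n = Real.exp (-(Real.log n / 2 + L)) := by
          rw [neg_add, Real.exp_add, Real.exp_neg, Real.exp_neg, h3, he, Real.exp_neg]
          ring
      _ ≤ _ := h4
  have hsqrt0 : 0 < Real.sqrt n := Real.sqrt_pos.2 hn0
  have hmainR : (t:ℝ) * (n:ℝ)^t < (ε' * n - 1) * ((d₀ + 1 - t : ℕ) : ℝ)^t := by
    have hXpos : 0 < ε' * n / 2 := by positivity
    have hstep1 : (ε' * n / 2)^t ≤ ((d₀ + 1 - t : ℕ) : ℝ)^t :=
      pow_le_pow_left₀ hXpos.le hdiff t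
    have hfact : (ε' * n / 2)^t = (ε'/2)^t * (n:ℝ)^t := by
      rw [← mul_pow]; ring_nf
    have hstep2 : (ε'/2) / Real.sqrt n * (n:ℝ)^t ≤ (ε' * n / 2)^t := by
      rw [hfact]
      exact mul_le_mul_of_nonneg_right hpow (by positivity)
    have hstep3 : (t:ℝ) < (ε' * n - 1) * ((ε'/2) / Real.sqrt n) := by
      rw [mul_div_assoc', lt_div_iff₀ hsqrt0]
      have h5 : (t:ℝ) * Real.sqrt n ≤ ((4*c+1)*q) * Real.sqrt n :=
        mul_le_mul_of_nonneg_right htub hsqrt0.le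
      calc (t:ℝ) * Real.sqrt n ≤ ((4*c+1)*q) * Real.sqrt n := h5
        _ < ((4*c+1)*q) * Real.sqrt n + 1 := by linarith
        _ ≤ (ε'/2) * (ε' * n - 1) := cond3
        _ = (ε' * n - 1) * (ε'/2) := by ring
    have hεn1 : (0:ℝ) < ε' * n - 1 := by clear hstep1 hstep2 hfact hstep3 hXpos hpow hdiff hcastsub; linarith
    calc (t:ℝ) * (n:ℝ)^t
        < ((ε' * n - 1) * ((ε'/2) / Real.sqrt n)) * (n:ℝ)^t :=
          mul_lt_mul_of_pos_right hstep3 (by positivity)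
      _ = (ε' * n - 1) * ((ε'/2) / Real.sqrt n * (n:ℝ)^t) := by ring
      _ ≤ (ε' * n - 1) * (ε' * n / 2)^t :=
          mul_le_mul_of_nonneg_left hstep2 hεn1.le
      _ ≤ (ε' * n - 1) * ((d₀ + 1 - t : ℕ) : ℝ)^t :=
          mul_le_mul_of_nonneg_left hstep1 hεn1.le
  have hstar : (t - 1) * n^t < k * (d₀ + 1 - t)^t := by
    have hc1 : ((t - 1 : ℕ) : ℝ) ≤ (t:ℝ) := by exact_mod_cast Nat.sub_le t 1
    have hc2 : (ε' * n - 1) ≤ (k:ℝ) := hkR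
    have hR : (((t - 1) * n^t : ℕ) : ℝ) < ((k * (d₀ + 1 - t)^t : ℕ) : ℝ) := by
      push_cast
      have hXnn : (0:ℝ) ≤ ((d₀ + 1 - t : ℕ) : ℝ)^t := by positivity
      calc ((t - 1 : ℕ) : ℝ) * (n:ℝ)^t ≤ (t:ℝ) * (n:ℝ)^t :=
            mul_le_mul_of_nonneg_right hc1 (by positivity)
        _ < (ε' * n - 1) * ((d₀ + 1 - t : ℕ) : ℝ)^t := hmainR
        _ ≤ (k:ℝ) * ((d₀ + 1 - t : ℕ) : ℝ)^t :=
            mul_le_mul_of_nonneg_right hc2 hXnn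
    exact_mod_cast hR
  have hchoose : (t - 1) * n.choose t < k * d₀.choose t := by
    have h1 : (Nat.factorial t) * ((t - 1) * n.choose t) ≤ (t-1) * n^t := by
      calc (Nat.factorial t) * ((t - 1) * n.choose t) = (t-1) * ((Nat.factorial t) * n.choose t) := by ring
        _ = (t-1) * n.descFactorial t := by rw [Nat.descFactorial_eq_factorial_mul_choose]
        _ ≤ (t-1) * n^t := Nat.mul_le_mul_left _ (Nat.descFactorial_le_pow n t)
    have h2 : k * (d₀ + 1 - t)^t ≤ (Nat.factorial t) * (k * d₀.choose t) := by
      calc k * (d₀ + 1 - t)^t ≤ k * d₀.descFactorial t :=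
            Nat.mul_le_mul_left _ (Nat.pow_sub_le_descFactorial d₀ t)
        _ = k * ((Nat.factorial t) * d₀.choose t) := by rw [Nat.descFactorial_eq_factorial_mul_choose]
        _ = (Nat.factorial t) * (k * d₀.choose t) := by ring
    have h3 : (Nat.factorial t) * ((t - 1) * n.choose t) < (Nat.factorial t) * (k * d₀.choose t) :=
      lt_of_le_of_lt h1 (lt_of_lt_of_le hstar h2)
    exact Nat.lt_of_mul_lt_mul_left h3
  obtain ⟨A, B, hdisj, hA, hB, hadj⟩ := key_lemma G t (by
    rw [hcard]; exact lt_of_lt_of_le hchoose hS)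
  refine ⟨A, B, hdisj, by rw [hA, hB], ?_, hadj⟩
  rw [hA]
  exact htlb
end

section
/- Every graph on n vertices admits a partition of its edge set into complete bipartite subgraphs G_i = (A_i, B_i) such that Σ_i(|A_i| + |B_i|) = O(n²/ln n). -/
open Finset

lemma nat_lt_div_succ_mul (a k : ℕ) (hk : 0 < k) : a < (a / k + 1) * k := by
  nlinarith [Nat.div_add_mod a k, Nat.mod_lt a hk, Nat.div_mul_le_self a k]

lemma decomp (V : Type) [Fintype V] [DecidableEq V] (G : SimpleGraph V) [DecidableRel G.Adj]
    (n k : ℕ) (hk : 1 ≤ k) (e : V ≃ Fin n) :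
    ∃ (t : ℕ) (A B : Fin t → Finset V),
      (∀ i, Disjoint (A i) (B i)) ∧
      (∀ i, ∀ a ∈ A i, ∀ b ∈ B i, G.Adj a b) ∧
      (∀ ed ∈ G.edgeFinset, ∃! i, ∃ a ∈ A i, ∃ b ∈ B i, ed = s(a, b)) ∧
      (∑ i, ((A i).card + (B i).card)) ≤ (n / k + 1) * (k * 2 ^ k + n) + 2 * n * k := by
  classical
  set m := n / k + 1 with hm
  set idx : V → ℕ := fun v => (e v : ℕ) with hidx
  set blk : V → ℕ := fun v => idx v / k with hblk
  set D : ℕ → Finset V := fun j => univ.filter (fun v => blk v = j) with hD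
  set nbr : ℕ → V → Finset V := fun j y => (D j).filter (fun x => G.Adj x y) with hnbr
  -- basic facts
  have hidx_inj : Function.Injective idx := fun a b h => e.injective (Fin.ext h)
  have hblk_lt : ∀ v, blk v < m := by
    intro v
    have h1 : idx v < n := (e v).isLt
    have h2 : blk v ≤ n / k := Nat.div_le_div_right h1.le
    omega
  have hmemD : ∀ v j, v ∈ D j ↔ blk v = j := by intro v j; simp [hD]
  have hblk_low : ∀ v, blk v * k ≤ idx v := fun v => Nat.div_mul_le_self _ _
  have hblk_high : ∀ v, idx v < (blk v + 1) * k := fun v => nat_lt_div_succ_mul _ _ hk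
  -- the index type
  set P1 : Fin m × Finset V → Prop := fun p => p.2.Nonempty ∧ p.2 ⊆ D p.1.val with hP1
  set P2 : V × V → Prop := fun p => G.Adj p.1 p.2 ∧ blk p.1 = blk p.2 ∧ idx p.1 < idx p.2
    with hP2
  set A₀ : (Fin m × Finset V) ⊕ (V × V) → Finset V := fun x =>
    Sum.rec (fun p => if P1 p then p.2 else ∅) (fun p => if P2 p then {p.1} else ∅) x with hA₀
  set B₀ : (Fin m × Finset V) ⊕ (V × V) → Finset V := fun x =>
    Sum.rec (fun p => if P1 p then univ.filter
        (fun y => p.1.val < blk y ∧ nbr p.1.val y = p.2) else ∅)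
      (fun p => if P2 p then {p.2} else ∅) x with hB₀
  have hA1 : ∀ (j : Fin m) (S : Finset V),
      A₀ (Sum.inl (j, S)) = if P1 (j, S) then S else ∅ := fun _ _ => rfl
  have hB1 : ∀ (j : Fin m) (S : Finset V),
      B₀ (Sum.inl (j, S)) = if P1 (j, S) then univ.filter
        (fun y => j.val < blk y ∧ nbr j.val y = S) else ∅ := fun _ _ => rfl
  have hA2 : ∀ (u v : V), A₀ (Sum.inr (u, v)) = if P2 (u, v) then {u} else ∅ := fun _ _ => rfl
  have hB2 : ∀ (u v : V), B₀ (Sum.inr (u, v)) = if P2 (u, v) then {v} else ∅ := fun _ _ => rfl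
  have hmemnbr : ∀ j y x, x ∈ nbr j y ↔ blk x = j ∧ G.Adj x y := by
    intro j y x; simp [hnbr, hD]
  -- disjointness
  have hdisj : ∀ x, Disjoint (A₀ x) (B₀ x) := by
    rintro (⟨j, S⟩ | ⟨u, v⟩)
    · by_cases h : P1 (j, S)
      · rw [hA1, hB1, if_pos h, if_pos h, Finset.disjoint_left]
        intro a haS hab
        have h1 : blk a = j.val := (hmemD a j.val).1 (h.2 haS)
        simp only [mem_filter] at hab
        omega
      · rw [hA1, if_neg h]; exact disjoint_empty_left _
    · by_cases h : P2 (u, v)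
      · rw [hA2, hB2, if_pos h, if_pos h, Finset.disjoint_left]
        intro a ha hb
        simp only [mem_singleton] at ha hb
        have : idx u < idx v := h.2.2
        subst ha; rw [hb] at this; omega
      · rw [hA2, if_neg h]; exact disjoint_empty_left _
  -- adjacency
  have hadjAB : ∀ x, ∀ a ∈ A₀ x, ∀ b ∈ B₀ x, G.Adj a b := by
    rintro (⟨j, S⟩ | ⟨u, v⟩) a ha b hb
    · by_cases h : P1 (j, S)
      · rw [hA1, if_pos h] at ha
        rw [hB1, if_pos h] at hb
        simp only [mem_filter] at hb
        have : a ∈ nbr j.val b := hb.2.2 ▸ ha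
        exact ((hmemnbr _ _ _).1 this).2
      · rw [hA1, if_neg h] at ha; exact absurd ha (notMem_empty a)
    · by_cases h : P2 (u, v)
      · rw [hA2, if_pos h] at ha
        rw [hB2, if_pos h] at hb
        simp only [mem_singleton] at ha hb
        rw [ha, hb]; exact h.1
      · rw [hA2, if_neg h] at ha; exact absurd ha (notMem_empty a)
  -- coverage (key lemma for canonically ordered pairs)
  have key : ∀ u v : V, G.Adj u v → (blk u < blk v ∨ (blk u = blk v ∧ idx u < idx v)) →
      ∃! x : (Fin m × Finset V) ⊕ (V × V),
        ∃ a ∈ A₀ x, ∃ b ∈ B₀ x, s(u, v) = s(a, b) := by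
    intro u v huv hcase
    rcases hcase with hlt | ⟨heq, hidxlt⟩
    · -- cross-block edge
      have huin : u ∈ nbr (blk u) v := (hmemnbr _ _ _).2 ⟨rfl, huv⟩
      have hP : P1 (⟨blk u, hblk_lt u⟩, nbr (blk u) v) :=
        ⟨⟨u, huin⟩, filter_subset _ _⟩
      refine ⟨Sum.inl (⟨blk u, hblk_lt u⟩, nbr (blk u) v), ?_, ?_⟩
      · refine ⟨u, ?_, v, ?_, rfl⟩
        · rw [hA1, if_pos hP]; exact huin
        · rw [hB1, if_pos hP, Finset.mem_filter]
          exact ⟨mem_univ v, hlt, rfl⟩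
      · rintro (⟨j, S⟩ | ⟨p, q⟩) ⟨a, ha, b, hb, hab⟩
        · by_cases h : P1 (j, S)
          · rw [hA1, if_pos h] at ha
            rw [hB1, if_pos h] at hb
            simp only [mem_filter, mem_univ, true_and] at hb
            have hba : blk a = j.val := (hmemD a j.val).1 (h.2 ha)
            rw [Sym2.eq_iff] at hab
            rcases hab with ⟨hua, hvb⟩ | ⟨hub, hva⟩
            · have hju : blk u = j.val := by rw [hua]; exact hba
              have hj : j = (⟨blk u, hblk_lt u⟩ : Fin m) := Fin.ext hju.symm
              subst hj
              have hS : S = nbr (blk u) v := by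
                rw [hvb]
                exact hb.2.symm
              rw [hS]
            · exfalso
              have c1 : blk v = j.val := by rw [hva]; exact hba
              have c2 : j.val < blk b := hb.1
              have c3 : blk u = blk b := by rw [hub]
              omega
          · rw [hA1, if_neg h] at ha; exact absurd ha (notMem_empty a)
        · by_cases h : P2 (p, q)
          · exfalso
            rw [hA2, if_pos h] at ha
            rw [hB2, if_pos h] at hb
            simp only [mem_singleton] at ha hb
            have hblkpq : blk p = blk q := h.2.1
            have h1 : blk a = blk b := by rw [ha, hb]; exact hblkpq
            rw [Sym2.eq_iff] at hab
            rcases hab with ⟨hua, hvb⟩ | ⟨hub, hva⟩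
            · have : blk u = blk v := by rw [hua, hvb]; exact h1
              omega
            · have : blk v = blk u := by rw [hva, hub]; exact h1
              omega
          · rw [hA2, if_neg h] at ha; exact absurd ha (notMem_empty a)
    · -- within-block edge
      have hP : P2 (u, v) := ⟨huv, heq, hidxlt⟩
      refine ⟨Sum.inr (u, v), ?_, ?_⟩
      · refine ⟨u, ?_, v, ?_, rfl⟩
        · rw [hA2, if_pos hP]; exact mem_singleton_self u
        · rw [hB2, if_pos hP]; exact mem_singleton_self v
      · rintro (⟨j, S⟩ | ⟨p, q⟩) ⟨a, ha, b, hb, hab⟩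
        · by_cases h : P1 (j, S)
          · exfalso
            rw [hA1, if_pos h] at ha
            rw [hB1, if_pos h] at hb
            simp only [mem_filter, mem_univ, true_and] at hb
            have hba : blk a = j.val := (hmemD a j.val).1 (h.2 ha)
            have hb1 : j.val < blk b := hb.1
            rw [Sym2.eq_iff] at hab
            rcases hab with ⟨hua, hvb⟩ | ⟨hub, hva⟩
            · rw [hua, hvb] at heq
              omega
            · rw [hub, hva] at heq
              omega
          · rw [hA1, if_neg h] at ha; exact absurd ha (notMem_empty a)
        · by_cases h : P2 (p, q)
          · rw [hA2, if_pos h] at ha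
            rw [hB2, if_pos h] at hb
            simp only [mem_singleton] at ha hb
            rw [Sym2.eq_iff] at hab
            rcases hab with ⟨hua, hvb⟩ | ⟨hub, hva⟩
            · rw [← ha, ← hb, ← hua, ← hvb]
            · exfalso
              have h3 : idx p < idx q := h.2.2
              rw [← ha, ← hb, ← hva, ← hub] at h3
              omega
          · rw [hA2, if_neg h] at ha; exact absurd ha (notMem_empty a)
  have hcover : ∀ ed ∈ G.edgeFinset, ∃! x : (Fin m × Finset V) ⊕ (V × V),
      ∃ a ∈ A₀ x, ∃ b ∈ B₀ x, ed = s(a, b) := by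
    intro ed hed
    induction ed using Sym2.ind with
    | _ u v =>
      have huv : G.Adj u v := by
        rw [SimpleGraph.mem_edgeFinset, SimpleGraph.mem_edgeSet] at hed
        exact hed
      rcases Nat.lt_trichotomy (blk u) (blk v) with hlt | heq | hgt
      · exact key u v huv (Or.inl hlt)
      · have hne : idx u ≠ idx v := fun h => huv.ne (hidx_inj h)
        rcases Nat.lt_or_ge (idx u) (idx v) with h1 | h1
        · exact key u v huv (Or.inr ⟨heq, h1⟩)
        · rw [Sym2.eq_swap]
          exact key v u huv.symm (Or.inr ⟨heq.symm, by omega⟩)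
      · rw [Sym2.eq_swap]
        exact key v u huv.symm (Or.inl hgt)
  -- the sum bound
  have hcardV : Fintype.card V = n := by
    rw [Fintype.card_congr e, Fintype.card_fin]
  have hsum : (∑ x : (Fin m × Finset V) ⊕ (V × V), ((A₀ x).card + (B₀ x).card))
      ≤ m * (k * 2 ^ k + n) + 2 * n * k := by
    rw [Fintype.sum_sum_type]
    have hpart2 : (∑ p : V × V, ((A₀ (Sum.inr p)).card + (B₀ (Sum.inr p)).card))
        ≤ 2 * n * k := by
      have hstep : ∀ p : V × V, ((A₀ (Sum.inr p)).card + (B₀ (Sum.inr p)).card)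
          ≤ if P2 p then 2 else 0 := by
        rintro ⟨u, v⟩
        by_cases h : P2 (u, v)
        · rw [hA2, hB2, if_pos h, if_pos h, if_pos h]; simp
        · rw [hA2, hB2, if_neg h, if_neg h, if_neg h]; simp
      calc (∑ p : V × V, ((A₀ (Sum.inr p)).card + (B₀ (Sum.inr p)).card))
          ≤ ∑ p : V × V, (if P2 p then 2 else 0) := Finset.sum_le_sum (fun p _ => hstep p)
        _ = ∑ u : V, ∑ v : V, (if P2 (u, v) then 2 else 0) := by rw [Fintype.sum_prod_type]
        _ ≤ ∑ u : V, 2 * k := by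
            apply Finset.sum_le_sum
            intro u _
            rw [← Finset.sum_filter]
            rw [Finset.sum_const, smul_eq_mul]
            have hcount : (univ.filter (fun v => P2 (u, v))).card ≤ k := by
              have hinj : Set.InjOn idx (univ.filter (fun v => P2 (u, v)) : Finset V) :=
                fun a _ b _ h => hidx_inj h
              have hmaps : ∀ v ∈ univ.filter (fun v => P2 (u, v)),
                  idx v ∈ Finset.Ico (idx u + 1) (idx u + k) := by
                intro v hv
                simp only [mem_filter, mem_univ, true_and, hP2] at hv
                obtain ⟨_, hbeq, hlt⟩ := hv
                have h1 := hblk_low u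
                have h2 := hblk_high v
                simp only [Finset.mem_Ico]
                constructor
                · omega
                · nlinarith
              have := Finset.card_le_card_of_injOn idx hmaps hinj
              rw [Nat.card_Ico] at this
              omega
            omega
        _ = 2 * n * k := by
            rw [Finset.sum_const, Finset.card_univ, hcardV, smul_eq_mul]; ring
    have hpart1 : (∑ p : Fin m × Finset V, ((A₀ (Sum.inl p)).card + (B₀ (Sum.inl p)).card))
        ≤ m * (k * 2 ^ k + n) := by
      rw [Fintype.sum_prod_type]
      calc (∑ j : Fin m, ∑ S : Finset V,
            ((A₀ (Sum.inl (j, S))).card + (B₀ (Sum.inl (j, S))).card))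
          ≤ ∑ _j : Fin m, (k * 2 ^ k + n) := by
            apply Finset.sum_le_sum
            intro j _
            have hDcard : (D j.val).card ≤ k := by
              have hinj : Set.InjOn idx (D j.val : Finset V) := fun a _ b _ h => hidx_inj h
              have hmaps : ∀ v ∈ D j.val,
                  idx v ∈ Finset.Ico (j.val * k) (j.val * k + k) := by
                intro v hv
                have hbv : blk v = j.val := (hmemD v j.val).1 hv
                have h1 := hblk_low v
                have h2 := hblk_high v
                simp only [Finset.mem_Ico]
                constructor
                · rw [← hbv]; exact h1
                · have : idx v < (j.val + 1) * k := by rw [← hbv]; exact h2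
                  nlinarith
              have := Finset.card_le_card_of_injOn idx hmaps hinj
              rw [Nat.card_Ico] at this
              omega
            rw [Finset.sum_add_distrib]
            have hsA : (∑ S : Finset V, (A₀ (Sum.inl (j, S))).card) ≤ k * 2 ^ k := by
              calc (∑ S : Finset V, (A₀ (Sum.inl (j, S))).card)
                  ≤ ∑ S : Finset V, (if S ⊆ D j.val then k else 0) := by
                    apply Finset.sum_le_sum
                    intro S _
                    by_cases h : P1 (j, S)
                    · rw [hA1, if_pos h, if_pos h.2]
                      exact le_trans (Finset.card_le_card h.2) hDcard
                    · rw [hA1, if_neg h]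
                      simp
                _ = (univ.filter (fun S : Finset V => S ⊆ D j.val)).card * k := by
                    rw [← Finset.sum_filter, Finset.sum_const, smul_eq_mul]
                _ ≤ 2 ^ k * k := by
                    have : univ.filter (fun S : Finset V => S ⊆ D j.val)
                        = (D j.val).powerset := by
                      ext S; simp [Finset.mem_powerset]
                    rw [this, Finset.card_powerset]
                    exact Nat.mul_le_mul_right k (Nat.pow_le_pow_right (by norm_num) hDcard)
                _ = k * 2 ^ k := Nat.mul_comm _ _
            have hsB : (∑ S : Finset V, (B₀ (Sum.inl (j, S))).card) ≤ n := by
              calc (∑ S : Finset V, (B₀ (Sum.inl (j, S))).card)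
                  ≤ ∑ S : Finset V,
                      ((univ.filter (fun y => j.val < blk y)).filter
                        (fun y => nbr j.val y = S)).card := by
                    apply Finset.sum_le_sum
                    intro S _
                    by_cases h : P1 (j, S)
                    · rw [hB1, if_pos h, Finset.filter_filter]
                    · rw [hB1, if_neg h]; simp
                _ = (univ.filter (fun y => j.val < blk y)).card := by
                    rw [← Finset.card_eq_sum_card_fiberwise
                      (f := fun y => nbr j.val y) (t := univ)]
                    intro x _; exact mem_univ _
                _ ≤ n := by
                    calc (univ.filter (fun y => j.val < blk y)).card
                        ≤ (univ : Finset V).card := Finset.card_filter_le _ _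
                      _ = n := by rw [Finset.card_univ, hcardV]
            omega
        _ = m * (k * 2 ^ k + n) := by
            rw [Finset.sum_const, Finset.card_univ, Fintype.card_fin, smul_eq_mul]
    omega
  -- transfer to Fin t
  have g : (Fin m × Finset V) ⊕ (V × V) ≃
      Fin (Fintype.card ((Fin m × Finset V) ⊕ (V × V))) := Fintype.equivFin _
  refine ⟨Fintype.card ((Fin m × Finset V) ⊕ (V × V)),
    fun i => A₀ (g.symm i), fun i => B₀ (g.symm i), ?_, ?_, ?_, ?_⟩
  · intro i; exact hdisj _
  · intro i; exact hadjAB _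
  · intro ed hed
    obtain ⟨x, hx, hu⟩ := hcover ed hed
    refine ⟨g x, ?_, ?_⟩
    · have hgx : g.symm (g x) = x := g.symm_apply_apply x
      simpa [hgx] using hx
    · intro i hi
      have := hu (g.symm i) hi
      rw [← this, g.apply_symm_apply]
  · calc (∑ i : Fin (Fintype.card ((Fin m × Finset V) ⊕ (V × V))), ((A₀ (g.symm i)).card + (B₀ (g.symm i)).card))
        = ∑ x : (Fin m × Finset V) ⊕ (V × V), ((A₀ x).card + (B₀ x).card) :=
          Equiv.sum_comp g.symm (fun x => (A₀ x).card + (B₀ x).card)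
      _ ≤ (n / k + 1) * (k * 2 ^ k + n) + 2 * n * k := hsum

set_option maxHeartbeats 1000000 in
theorem stmt15 :
    ∃ C : ℝ, 0 < C ∧ ∀ n : ℕ, 2 ≤ n → ∀ (V : Type) [Fintype V] [DecidableEq V]
      (G : SimpleGraph V) [DecidableRel G.Adj], Fintype.card V = n →
      ∃ (t : ℕ) (A B : Fin t → Finset V),
        (∀ i, Disjoint (A i) (B i)) ∧
        (∀ i, ∀ a ∈ A i, ∀ b ∈ B i, G.Adj a b) ∧
        (∀ e ∈ G.edgeFinset, ∃! i, ∃ a ∈ A i, ∃ b ∈ B i, e = s(a, b)) ∧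
        (∑ i, ((A i).card + (B i).card : ℝ)) ≤ C * n ^ 2 / Real.log n := by
  refine ⟨100, by norm_num, ?_⟩
  intro n hn V _ _ G _ hVn
  set l := Nat.log 2 n with hl
  set k := l / 2 + 1 with hkdef
  have hk : 1 ≤ k := Nat.le_add_left 1 _
  have e : V ≃ Fin n := Fintype.equivFinOfCardEq hVn
  obtain ⟨t, A, B, h1, h2, h3, h4⟩ := decomp V G n k hk e
  refine ⟨t, A, B, h1, h2, h3, ?_⟩
  have hcast : (∑ i, ((A i).card + (B i).card : ℝ))
      = ((∑ i, ((A i).card + (B i).card) : ℕ) : ℝ) := by push_cast; rfl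
  rw [hcast]
  -- nat-level facts
  have hln : l ≤ n := Nat.log_le_self 2 n
  have hkn : k ≤ n := by omega
  have hmk : (n / k + 1) * k ≤ 2 * n := by
    have h := Nat.div_mul_le_self n k
    nlinarith
  have hpow2 : 2 ^ (2 * (l / 2)) ≤ n := by
    calc 2 ^ (2 * (l / 2)) ≤ 2 ^ l := Nat.pow_le_pow_right (by norm_num) (by omega)
      _ ≤ n := Nat.pow_log_le_self 2 (by omega)
  have hnpow : n < 2 ^ (l + 1) := Nat.lt_pow_succ_log_self (by norm_num) n
  -- real-level facts
  set L := Real.log n with hLdef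
  have hn1 : (1 : ℝ) < n := by exact_mod_cast hn.trans_lt' one_lt_two
  have hn0 : (0 : ℝ) < n := by linarith
  have hL : 0 < L := Real.log_pos hn1
  set s := Real.sqrt n with hsdef
  have hs : s * s = n := Real.mul_self_sqrt hn0.le
  have hs0 : 0 < s := Real.sqrt_pos.2 hn0
  have hLs : L ≤ 2 * s := by
    have h1 : Real.log s = L / 2 := Real.log_sqrt hn0.le
    have h2 : Real.log s ≤ s - 1 := Real.log_le_sub_one_of_pos hs0
    linarith
  have h2k : ((2 : ℝ)) ^ k ≤ 2 * s := by
    have h1 : ((2 : ℝ)) ^ (l / 2) ≤ s := by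
      rw [hsdef, Real.le_sqrt (by positivity) hn0.le]
      calc ((2 : ℝ) ^ (l / 2)) ^ 2 = ((2 ^ (2 * (l / 2)) : ℕ) : ℝ) := by
            push_cast; rw [← pow_mul, Nat.mul_comm]
        _ ≤ (n : ℝ) := by exact_mod_cast hpow2
    calc ((2 : ℝ)) ^ k = 2 * 2 ^ (l / 2) := by rw [hkdef, pow_succ]; ring
      _ ≤ 2 * s := by linarith
  have hlog2 : (0.6931471803 : ℝ) < Real.log 2 := Real.log_two_gt_d9
  have hlog2' : Real.log 2 ≤ 1 := by
    have := Real.log_le_sub_one_of_pos (by norm_num : (0:ℝ) < 2)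
    linarith
  have hLk : L ≤ 2 * k := by
    have h1 : (n : ℝ) ≤ (2 : ℝ) ^ (l + 1) := by exact_mod_cast hnpow.le
    have h2 : L ≤ (l + 1) * Real.log 2 := by
      calc L ≤ Real.log ((2 : ℝ) ^ (l + 1)) := Real.log_le_log hn0 h1
        _ = (l + 1) * Real.log 2 := by rw [Real.log_pow]; push_cast; ring
    have h3 : (l + 1 : ℝ) ≤ 2 * k := by
      have : l ≤ 2 * (l / 2) + 1 := by omega
      have h4 : (l : ℝ) ≤ 2 * (l / 2 : ℕ) + 1 := by exact_mod_cast this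
      rw [hkdef]; push_cast; linarith
    have h5 : ((l : ℝ) + 1) * Real.log 2 ≤ (l : ℝ) + 1 := by
      have h6 := mul_le_mul_of_nonneg_left hlog2' (by positivity : (0:ℝ) ≤ (l:ℝ) + 1)
      linarith
    push_cast at h2
    linarith
  have hkL : (k : ℝ) ≤ 4 * L := by
    have h1 : (l : ℝ) * Real.log 2 ≤ L := by
      calc (l : ℝ) * Real.log 2 = Real.log ((2 : ℝ) ^ l) := by rw [Real.log_pow]
        _ ≤ L := Real.log_le_log (by positivity) (by exact_mod_cast Nat.pow_log_le_self 2 (by omega : n ≠ 0))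
    have h2 : (l : ℝ) ≤ 2 * L := by
      have h7 := mul_nonneg (Nat.cast_nonneg (α := ℝ) l) (by linarith : (0:ℝ) ≤ Real.log 2 - 1/2)
      nlinarith
    have h3 : Real.log 2 ≤ L := Real.log_le_log (by norm_num) (by exact_mod_cast hn)
    have h4 : (k : ℝ) ≤ (l : ℝ) + 1 := by
      rw [hkdef]; push_cast
      have : ((l / 2 : ℕ) : ℝ) ≤ (l : ℝ) := by exact_mod_cast Nat.div_le_self l 2
      linarith
    linarith
  have hL2 : L * L ≤ 4 * n := by
    have h6 := mul_self_le_mul_self hL.le hLs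
    nlinarith
  have h2kL : (2 : ℝ) ^ k * L ≤ 4 * n := by
    have h6 := mul_le_mul h2k hLs hL.le (by positivity : (0:ℝ) ≤ 2 * s)
    nlinarith
  -- the final bound
  have hX : ((∑ i, ((A i).card + (B i).card) : ℕ) : ℝ)
      ≤ ((n / k + 1) * (k * 2 ^ k + n) + 2 * n * k : ℕ) := by exact_mod_cast h4
  rw [le_div_iff₀ hL]
  have hmkR : (((n / k + 1) * k : ℕ) : ℝ) ≤ 2 * n := by exact_mod_cast hmk
  have hM0 : (0 : ℝ) ≤ ((n / k + 1 : ℕ) : ℝ) := by positivity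
  have t1 : (((n / k + 1) * k : ℕ) : ℝ) * 2 ^ k * L ≤ 8 * n ^ 2 := by
    calc (((n / k + 1) * k : ℕ) : ℝ) * 2 ^ k * L
        = (((n / k + 1) * k : ℕ) : ℝ) * (2 ^ k * L) := by ring
      _ ≤ (2 * n) * (4 * n) := by
          apply mul_le_mul hmkR h2kL (by positivity) (by positivity)
      _ = 8 * n ^ 2 := by ring
  have t2 : ((n / k + 1 : ℕ) : ℝ) * n * L ≤ 4 * n ^ 2 := by
    have hML : ((n / k + 1 : ℕ) : ℝ) * L ≤ 4 * n := by
      calc ((n / k + 1 : ℕ) : ℝ) * L ≤ ((n / k + 1 : ℕ) : ℝ) * (2 * k) :=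
            mul_le_mul_of_nonneg_left hLk hM0
        _ = 2 * ((((n / k + 1) * k : ℕ) : ℝ)) := by push_cast; ring
        _ ≤ 2 * (2 * n) := by linarith
        _ = 4 * n := by ring
    calc ((n / k + 1 : ℕ) : ℝ) * n * L = (((n / k + 1 : ℕ) : ℝ) * L) * n := by ring
      _ ≤ (4 * n) * n := mul_le_mul_of_nonneg_right hML hn0.le
      _ = 4 * n ^ 2 := by ring
  have t3 : 2 * (n : ℝ) * k * L ≤ 32 * n ^ 2 := by
    have hKL : (k : ℝ) * L ≤ 16 * n := by
      have h6 := mul_le_mul_of_nonneg_right hkL hL.le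
      linarith
    calc 2 * (n : ℝ) * k * L = 2 * n * ((k : ℝ) * L) := by ring
      _ ≤ 2 * n * (16 * n) := mul_le_mul_of_nonneg_left hKL (by positivity)
      _ = 32 * n ^ 2 := by ring
  calc ((∑ i, ((A i).card + (B i).card) : ℕ) : ℝ) * L
      ≤ (((n / k + 1) * (k * 2 ^ k + n) + 2 * n * k : ℕ) : ℝ) * L :=
        mul_le_mul_of_nonneg_right hX hL.le
    _ = (((n / k + 1) * k : ℕ) : ℝ) * 2 ^ k * L + ((n / k + 1 : ℕ) : ℝ) * n * L
        + 2 * n * k * L := by push_cast; ring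
    _ ≤ 8 * n ^ 2 + 4 * n ^ 2 + 32 * n ^ 2 := by
        exact add_le_add (add_le_add t1 t2) t3
    _ ≤ 100 * n ^ 2 := by nlinarith [sq_nonneg (n : ℝ)]
end

section
/- Suppose a sequence of complete balanced bipartite graphs with part sizes q_1, …, q_t is removed from an n-vertex graph, where each removal during 'phase ℓ' (when the current edge count lies in (n²/(ℓ+1), n²/ℓ]) satisfies q_i ≥ c·ln n / ln(ℓ+2) for a constant c > 0. Then Σ_i q_i = O(n²/ln n). -/
/-!
Measure the state by the potential `Φ(M) = ∑_{k=1}^{M} log (N/k + 2)` with `N = n²`. While the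
current edge count `m` lies in phase `ℓ = ⌊N/m⌋`, every term `k ≤ m` of `Φ(m)` is at least
`log (ℓ + 2)`, so removing `q²` edges lowers `Φ` by at least `q² log (ℓ + 2) ≥ c q log n`.
Summing, `c log n ∑ qᵢ ≤ Φ(N) ≤ N log 3 + ∑_{k ≤ N} log (N/k) ≤ (log 3 + 1) N` by `N^N/N! ≤ e^N`.
-/

open Finset Real
open scoped Nat

noncomputable def phasePotential (N M : ℕ) : ℝ :=
  ∑ k ∈ range M, log (N / (k + 1) + 2)

lemma sum_log_div_le (N : ℕ) : ∑ k ∈ range N, log ((N : ℝ) / (k + 1)) ≤ N := by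
  rcases N.eq_zero_or_pos with rfl | hN
  · simp
  have hNR : (N : ℝ) ≠ 0 := by exact_mod_cast hN.ne'
  have hfact : ∏ k ∈ range N, ((k : ℝ) + 1) = N ! := by
    exact_mod_cast prod_range_add_one_eq_factorial N
  rw [← log_prod fun k _ => div_ne_zero hNR (by positivity), prod_div_distrib, prod_const,
    card_range, hfact, log_le_iff_le_exp (by positivity)]
  exact pow_div_factorial_le_exp _ (Nat.cast_nonneg N) N

lemma phasePotential_mono (N : ℕ) : Monotone (phasePotential N) := fun _ _ hab =>
  sum_le_sum_of_subset_of_nonneg (range_mono hab) fun k _ _ =>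
    log_nonneg (by linarith [show (0 : ℝ) ≤ N / (k + 1) by positivity])

lemma phasePotential_nonneg (N M : ℕ) : 0 ≤ phasePotential N M := by
  simpa [phasePotential] using phasePotential_mono N (Nat.zero_le M)

lemma phasePotential_self_le (N : ℕ) : phasePotential N N ≤ (log 3 + 1) * N := by
  have hterm : ∀ k ∈ range N, log (N / (k + 1) + 2) ≤ log 3 + log ((N : ℝ) / (k + 1)) := by
    intro k hk
    have hk : (k : ℝ) + 1 ≤ N := by exact_mod_cast mem_range.1 hk
    have hone : 1 ≤ (N : ℝ) / (k + 1) := (one_le_div (by positivity)).2 hk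
    rw [← log_mul (by norm_num) (by positivity)]
    exact log_le_log (by positivity) (by linarith)
  calc phasePotential N N ≤ ∑ k ∈ range N, (log 3 + log ((N : ℝ) / (k + 1))) :=
        sum_le_sum hterm
    _ = log 3 * N + ∑ k ∈ range N, log ((N : ℝ) / (k + 1)) := by
        rw [sum_add_distrib, sum_const, card_range, nsmul_eq_mul, mul_comm]
    _ ≤ (log 3 + 1) * N := by linarith [sum_log_div_le N]

lemma mul_log_le_phasePotential_sub {N L a b : ℕ} (hab : a ≤ b) (hLb : L * b ≤ N) :
    ((b - a : ℕ) : ℝ) * log (L + 2) ≤ phasePotential N b - phasePotential N a := by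
  rw [phasePotential, phasePotential, ← sum_range_add_sum_Ico _ hab, add_sub_cancel_left,
    ← Nat.card_Ico, ← nsmul_eq_mul]
  refine card_nsmul_le_sum _ _ _ fun k hk => log_le_log (by positivity) ?_
  have hLk : L * (k + 1) ≤ N := (Nat.mul_le_mul_left L (mem_Ico.1 hk).2).trans hLb
  have : (L : ℝ) ≤ N / (k + 1) := (le_div_iff₀ (by positivity)).2 (by exact_mod_cast hLk)
  linarith

lemma div_lt_and_le_div_of_phase {N m : ℕ} (hm : 0 < m) (hmN : m ≤ N) :
    (N : ℝ) / ((N / m : ℕ) + 1) < m ∧ (m : ℝ) ≤ N / (N / m : ℕ) := by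
  have hL : (0 : ℝ) < (N / m : ℕ) := by exact_mod_cast Nat.div_pos hmN hm
  have hlt : N < (N / m + 1) * m := (Nat.div_lt_iff_lt_mul hm).1 (Nat.lt_succ_self _)
  constructor
  · rw [div_lt_iff₀ (by positivity), mul_comm]
    exact_mod_cast hlt
  · rw [le_div_iff₀ hL, mul_comm]
    exact_mod_cast Nat.div_mul_le_self N m

lemma mul_le_phasePotential_sub {N m q : ℕ} {a : ℝ} (hqm : q ^ 2 ≤ m) (hmN : m ≤ N)
    (hphase : ∀ ℓ : ℕ, 1 ≤ ℓ → (N : ℝ) / (ℓ + 1) < m → (m : ℝ) ≤ N / ℓ → a / log (ℓ + 2) ≤ q) :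
    a * q ≤ phasePotential N m - phasePotential N (m - q ^ 2) := by
  rcases q.eq_zero_or_pos with rfl | hq
  · simp
  have hm : 0 < m := (pow_pos hq 2).trans_le hqm
  set L := N / m
  obtain ⟨hlow, hup⟩ := div_lt_and_le_div_of_phase hm hmN
  have hlog : 0 < log (L + 2) := log_pos (by linarith [(Nat.cast_nonneg L : (0 : ℝ) ≤ L)])
  have ha : a ≤ q * log (L + 2) :=
    (div_le_iff₀ hlog).1 (hphase L (Nat.div_pos hmN hm) hlow hup)
  have hdrop := mul_log_le_phasePotential_sub (Nat.sub_le m (q ^ 2)) (Nat.div_mul_le_self N m)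
  rw [Nat.sub_sub_self hqm] at hdrop
  push_cast at hdrop
  calc a * q ≤ q * log (L + 2) * q := mul_le_mul_of_nonneg_right ha (Nat.cast_nonneg q)
    _ = (q : ℝ) ^ 2 * log (L + 2) := by ring
    _ ≤ _ := hdrop

theorem stmt16 :
    ∀ c : ℝ, 0 < c → ∃ C : ℝ, 0 < C ∧ ∀ n : ℕ, 3 ≤ n →
      ∀ (t : ℕ) (q : ℕ → ℕ) (m : ℕ → ℕ),
        m 0 ≤ n ^ 2 →
        (∀ i < t, q i ^ 2 ≤ m i ∧ m (i + 1) = m i - q i ^ 2) →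
        (∀ i < t, ∀ ℓ : ℕ, 1 ≤ ℓ →
          (n : ℝ) ^ 2 / (ℓ + 1) < (m i : ℝ) → (m i : ℝ) ≤ (n : ℝ) ^ 2 / ℓ →
          c * Real.log n / Real.log (ℓ + 2) ≤ (q i : ℝ)) →
        (∑ i ∈ Finset.range t, (q i : ℝ)) ≤ C * n ^ 2 / Real.log n := by
  intro c hc
  refine ⟨(log 3 + 1) / c, by positivity, fun n hn t q m hm0 hstep hphase => ?_⟩
  have hmN : ∀ i ≤ t, m i ≤ n ^ 2 := by
    intro i hi
    induction i with
    | zero => exact hm0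
    | succ i ih => rw [(hstep i hi).2]; exact (Nat.sub_le _ _).trans (ih (by omega))
  have hdrop : ∀ i ∈ range t, c * log n * q i ≤
      phasePotential (n ^ 2) (m i) - phasePotential (n ^ 2) (m (i + 1)) := by
    intro i hi
    have hi := mem_range.1 hi
    rw [(hstep i hi).2]
    exact mul_le_phasePotential_sub (hstep i hi).1 (hmN i hi.le) (by exact_mod_cast hphase i hi)
  have hsum : c * log n * ∑ i ∈ range t, (q i : ℝ) ≤ (log 3 + 1) * n ^ 2 := by
    rw [mul_sum]
    calc _ ≤ phasePotential (n ^ 2) (m 0) - phasePotential (n ^ 2) (m t) :=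
          (sum_le_sum hdrop).trans_eq (sum_range_sub' (fun i => phasePotential _ (m i)) t)
      _ ≤ phasePotential (n ^ 2) (n ^ 2) := by
          linarith [phasePotential_mono (n ^ 2) hm0, phasePotential_nonneg (n ^ 2) (m t)]
      _ ≤ (log 3 + 1) * n ^ 2 := by exact_mod_cast phasePotential_self_le (n ^ 2)
  have hlogn : 0 < log n := log_pos (by exact_mod_cast (by omega : 1 < n))
  rw [div_mul_eq_mul_div, div_div, le_div_iff₀ (by positivity)]
  linarith
end
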